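/- If A is a commutative ring that is finitely generated as a Z-algebra, and q is a maximal ideal of A, then q ∩ Z is a nonzero prime ideal of Z; i.e., the residue field A/q has positive characteristic. -/

import Mathlib

/-!
The residue field `A ⧸ q` is a field of finite type over `ℤ`. Since `ℤ` is a Jacobson ring,
Zariski's lemma makes it a finite, hence integral, `ℤ`-module. A field integral over `ℤ`
cannot have characteristic zero: `ℤ` would then embed into it, and an integral extension of
domains that is a field forces `ℤ` to be a field. So `A ⧸ q` has characteristic `p > 0`,
and `p` is a nonzero element of `q ∩ ℤ`.
-/

theorem isJacobsonRing_of_jacobson_bot {R : Type*} [CommRing R] [Ring.DimensionLEOne R]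
    (h : (⊥ : Ideal R).jacobson = ⊥) : IsJacobsonRing R := by
  refine isJacobsonRing_iff_prime_eq.mpr fun P hP => ?_
  rcases eq_or_ne P ⊥ with rfl | hP_ne
  · exact h
  · exact Ideal.jacobson_eq_self_of_isMaximal (H := hP.isMaximal hP_ne)

theorem Int.jacobson_bot : (⊥ : Ideal ℤ).jacobson = ⊥ := by
  refine le_antisymm (fun x hx => ?_) Ideal.le_jacobson
  have h_plus := Ideal.mem_jacobson_bot.mp hx 1
  have h_minus := Ideal.mem_jacobson_bot.mp hx (-1)
  rw [Int.isUnit_iff] at h_plus h_minus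
  rw [Ideal.mem_bot]
  omega

instance Int.isJacobsonRing : IsJacobsonRing ℤ :=
  isJacobsonRing_of_jacobson_bot Int.jacobson_bot

theorem not_charZero_of_isIntegral_int (K : Type*) [Field K] [Algebra.IsIntegral ℤ K] :
    ¬CharZero K := fun _ =>
  Int.not_isField <| isField_of_isIntegral_of_isField (algebraMap ℤ K).injective_int
    (Field.toIsField K)

theorem ringChar_pos_of_isIntegral_int (K : Type*) [Field K] [Algebra.IsIntegral ℤ K] :
    0 < ringChar K :=
  Nat.pos_of_ne_zero fun h =>
    not_charZero_of_isIntegral_int K ((CharP.ringChar_zero_iff_CharZero K).mp h)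

theorem Ideal.comap_int_ne_bot_of_ringChar_quotient_pos {A : Type*} [CommRing A] (q : Ideal A)
    (h : 0 < ringChar (A ⧸ q)) : q.comap (algebraMap ℤ A) ≠ ⊥ := by
  intro h_bot
  have h_mem : (ringChar (A ⧸ q) : ℤ) ∈ q.comap (algebraMap ℤ A) := by
    rw [Ideal.mem_comap, ← Ideal.Quotient.eq_zero_iff_mem, map_natCast, map_natCast]
    exact ringChar.Nat.cast_ringChar
  rw [h_bot, Ideal.mem_bot] at h_mem
  omega

/-- If `A` is a finitely generated `ℤ`-algebra and `q` a maximal ideal of `A`,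
then the contraction `q ∩ ℤ` is a nonzero prime of `ℤ`; equivalently the residue
field `A/q` has positive characteristic. -/
theorem stmt3 (A : Type*) [CommRing A] [Algebra.FiniteType ℤ A]
    (q : Ideal A) (hq : q.IsMaximal) :
    q.comap (algebraMap ℤ A) ≠ ⊥ ∧ (q.comap (algebraMap ℤ A)).IsPrime ∧
      0 < ringChar (A ⧸ q) := by
  let : Field (A ⧸ q) := Ideal.Quotient.field q
  have : Module.Finite ℤ (A ⧸ q) := finite_of_finite_type_of_isJacobsonRing ℤ (A ⧸ q)
  have : Algebra.IsIntegral ℤ (A ⧸ q) := .of_finite ℤ (A ⧸ q)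
  have h_char : 0 < ringChar (A ⧸ q) := ringChar_pos_of_isIntegral_int (A ⧸ q)
  exact ⟨q.comap_int_ne_bot_of_ringChar_quotient_pos h_char, Ideal.IsPrime.comap _, h_char⟩
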